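/- Let Λ be a finite index set, d ≥ 1, and let B i j ∈ M_d(ℂ) satisfy Σ_{i∈Λ} (B i j)ᴴ (B i j) = 1 for every j ∈ Λ. Let ρ = (ρ_j)_{j∈Λ} be a block state, M the OQRW map, ρ^{(m)} := M^m(ρ), and Λ(ρ^{(m)}) := { i ∈ Λ : ρ^{(m)}_i ≠ 0 }. Then for every n ≥ 0, every j ∈ Λ(ρ^{(n)}) and every k ≥ 1: Σ_{i_1 ∈ Λ(ρ^{(n+1)})} ⋯ Σ_{i_k ∈ Λ(ρ^{(n+k)})} Tr( ρ^{(n)}_j · (B_π)ᴴ B_π ) = Tr(ρ^{(n)}_j), where π = (j, i_1, …, i_k); that is, restricting the path sum to the supports of the evolved states does not change the total trace. (Paper's Lemma 4.3(iii): Tr(ρ^{(n)}_j b̄(n,j)) = Tr(ρ^{(n)}_j), at each finite depth k.) -/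

import Mathlib

/-!
Order matrices by the Loewner order. The identity is proved for every `A` with
`0 ≤ A ≤ ρ⁽ⁿ⁾_j` in place of `ρ⁽ⁿ⁾_j`, by induction on the depth `k`. Peeling off the first
step `i₁ = x` of the path replaces `A` by `B x j * A * (B x j)ᴴ`, which again lies between `0` and
`ρ⁽ⁿ⁺¹⁾_x`; in particular it vanishes when `ρ⁽ⁿ⁺¹⁾_x = 0`, so restricting `x` to the support
loses nothing, and `∑ₓ Tr (B x j * A * (B x j)ᴴ) = Tr A` by `∑ₓ (B x j)ᴴ * B x j = 1`.
-/

open Matrix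
open scoped Classical ComplexOrder MatrixOrder

/-- The path operator `B_π = B i_l i_{l-1} ⋯ B i_1 i_0` for a path
`π = (i_0, i_1, …, i_l)` in `Λ`. -/
noncomputable def pathOp {Λ : Type*} {d : ℕ} (B : Λ → Λ → Matrix (Fin d) (Fin d) ℂ)
    {l : ℕ} (π : Fin (l + 1) → Λ) : Matrix (Fin d) (Fin d) ℂ :=
  ((List.ofFn (fun k : Fin l => B (π k.succ) (π k.castSucc))).reverse).prod

theorem Fintype.sum_piFinset_succ {β : Type*} [AddCommMonoid β] {n : ℕ}
    {α : Fin (n + 1) → Type*}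
    (S : (i : Fin (n + 1)) → Finset (α i)) (f : ((i : Fin (n + 1)) → α i) → β) :
    ∑ i ∈ Fintype.piFinset S, f i =
      ∑ x ∈ S 0, ∑ i ∈ Fintype.piFinset (Fin.tail S), f (Fin.cons x i) := by
  have h := Finset.filter_piFinset_eq_map_consEquiv S (fun _ => True)
  simp only [Finset.filter_true] at h
  rw [h, Finset.sum_map, Finset.sum_product]
  rfl

theorem Matrix.sum_trace_mul_mul_conjTranspose_of_sum_eq_one {ι n R : Type*} [Fintype ι]
    [Fintype n] [DecidableEq n] [CommSemiring R] [StarRing R]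
    (C : ι → Matrix n n R) (hC : ∑ i, (C i)ᴴ * C i = 1) (A : Matrix n n R) :
    ∑ i, (C i * A * (C i)ᴴ).trace = A.trace := by
  simp_rw [Matrix.trace_mul_cycle (C _), ← Matrix.trace_sum, ← Finset.sum_mul, hC, one_mul]

section PathOp

variable {Λ : Type*} {d : ℕ} (B : Λ → Λ → Matrix (Fin d) (Fin d) ℂ)

theorem pathOp_cons_nil (j : Λ) (π : Fin 0 → Λ) : pathOp B (Fin.cons j π) = 1 := rfl

theorem pathOp_cons {l : ℕ} (j : Λ) (π : Fin (l + 1) → Λ) :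
    pathOp B (Fin.cons j π) = pathOp B π * B (π 0) j := by
  rw [pathOp, List.ofFn_succ, List.reverse_cons, List.prod_append, List.prod_singleton]
  simp [pathOp]

theorem trace_mul_pathOp_cons (A : Matrix (Fin d) (Fin d) ℂ) {l : ℕ} (j : Λ)
    (π : Fin (l + 1) → Λ) :
    (A * ((pathOp B (Fin.cons j π))ᴴ * pathOp B (Fin.cons j π))).trace =
      (B (π 0) j * A * (B (π 0) j)ᴴ * ((pathOp B π)ᴴ * pathOp B π)).trace := by
  rw [pathOp_cons, conjTranspose_mul]
  calc (A * ((B (π 0) j)ᴴ * (pathOp B π)ᴴ * (pathOp B π * B (π 0) j))).trace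
      = (A * (B (π 0) j)ᴴ * ((pathOp B π)ᴴ * pathOp B π) * B (π 0) j).trace := by
        simp only [Matrix.mul_assoc]
    _ = _ := by rw [trace_mul_comm]; simp only [Matrix.mul_assoc]

end PathOp

noncomputable def blockSupport {Λ α : Type*} [Fintype Λ] [Zero α] (σ : Λ → α) : Finset Λ :=
  Finset.univ.filter fun i => σ i ≠ 0

section Trajectory

variable {Λ : Type*} [Fintype Λ] {d : ℕ} (B : Λ → Λ → Matrix (Fin d) (Fin d) ℂ)

theorem sum_piFinset_blockSupport_trace_mul_pathOp
    (hB : ∀ j : Λ, ∑ i : Λ, (B i j)ᴴ * B i j = 1)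
    (σ : ℕ → Λ → Matrix (Fin d) (Fin d) ℂ)
    (hσ : ∀ m i j, B i j * σ m j * (B i j)ᴴ ≤ σ (m + 1) i) (k m : ℕ) (j : Λ)
    {A : Matrix (Fin d) (Fin d) ℂ} (hA : 0 ≤ A) (hAσ : A ≤ σ m j) :
    ∑ π ∈ Fintype.piFinset (fun t : Fin k => blockSupport (σ (m + t + 1))),
      (A * ((pathOp B (Fin.cons j π))ᴴ * pathOp B (Fin.cons j π))).trace = A.trace := by
  induction k generalizing m j A with
  | zero => simp [pathOp_cons_nil]
  | succ k ih =>
    have hconj_nonneg (i : Λ) : 0 ≤ B i j * A * (B i j)ᴴ := star_right_conjugate_nonneg hA _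
    have hconj_le (i : Λ) : B i j * A * (B i j)ᴴ ≤ σ (m + 1) i :=
      (star_right_conjugate_le_conjugate hAσ _).trans (hσ m i j)
    have htail : Fin.tail (fun t : Fin (k + 1) => blockSupport (σ (m + t + 1))) =
        fun t : Fin k => blockSupport (σ (m + 1 + t + 1)) := by
      ext t : 1
      simp only [Fin.tail, Fin.val_succ]
      ring_nf
    rw [Fintype.sum_piFinset_succ, htail]
    simp_rw [trace_mul_pathOp_cons, Fin.cons_zero]
    calc ∑ i ∈ blockSupport (σ (m + 1)), ∑ π ∈ Fintype.piFinset
            (fun t : Fin k => blockSupport (σ (m + 1 + t + 1))),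
            (B i j * A * (B i j)ᴴ * ((pathOp B (Fin.cons i π))ᴴ * pathOp B (Fin.cons i π))).trace
        = ∑ i ∈ blockSupport (σ (m + 1)), (B i j * A * (B i j)ᴴ).trace :=
          Finset.sum_congr rfl fun i _ => ih (m + 1) i (hconj_nonneg i) (hconj_le i)
      _ = ∑ i, (B i j * A * (B i j)ᴴ).trace := by
          refine Finset.sum_subset (Finset.subset_univ _) fun i _ hi => ?_
          have hσi : σ (m + 1) i = 0 := by simpa [blockSupport] using hi
          rw [le_antisymm (hσi ▸ hconj_le i) (hconj_nonneg i), trace_zero]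
      _ = A.trace := sum_trace_mul_mul_conjTranspose_of_sum_eq_one (fun i => B i j) (hB j) A

end Trajectory

namespace OQRW

variable {Λ : Type*} [Fintype Λ] {d : ℕ} (B : Λ → Λ → Matrix (Fin d) (Fin d) ℂ)
  (M : (Λ → Matrix (Fin d) (Fin d) ℂ) → Λ → Matrix (Fin d) (Fin d) ℂ)

theorem iterate_nonneg (hM : ∀ σ i, M σ i = ∑ j : Λ, B i j * σ j * (B i j)ᴴ)
    {ρ : Λ → Matrix (Fin d) (Fin d) ℂ} (hρ : ∀ j, 0 ≤ ρ j) (m : ℕ) (j : Λ) :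
    0 ≤ (M^[m] ρ) j := by
  induction m generalizing j with
  | zero => exact hρ j
  | succ m ih =>
    rw [Function.iterate_succ_apply', hM]
    exact Finset.sum_nonneg fun i _ => star_right_conjugate_nonneg (ih i) _

theorem conj_iterate_le_iterate_succ (hM : ∀ σ i, M σ i = ∑ j : Λ, B i j * σ j * (B i j)ᴴ)
    {ρ : Λ → Matrix (Fin d) (Fin d) ℂ} (hρ : ∀ j, 0 ≤ ρ j) (m : ℕ) (i j : Λ) :
    B i j * (M^[m] ρ) j * (B i j)ᴴ ≤ (M^[m + 1] ρ) i := by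
  rw [Function.iterate_succ_apply', hM]
  exact Finset.single_le_sum (f := fun j => B i j * (M^[m] ρ) j * (B i j)ᴴ)
    (fun j _ => star_right_conjugate_nonneg (iterate_nonneg B M hM hρ m j) _) (Finset.mem_univ j)

end OQRW

theorem lemma4_3_iii_general {Λ : Type*} [Fintype Λ] {d : ℕ}
    (B : Λ → Λ → Matrix (Fin d) (Fin d) ℂ)
    (hB : ∀ j : Λ, ∑ i : Λ, (B i j)ᴴ * B i j = 1)
    (ρ : Λ → Matrix (Fin d) (Fin d) ℂ)
    (hρ : ∀ j, (ρ j).PosSemidef)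
    (M : (Λ → Matrix (Fin d) (Fin d) ℂ) → Λ → Matrix (Fin d) (Fin d) ℂ)
    (hM : ∀ σ i, M σ i = ∑ j : Λ, B i j * σ j * (B i j)ᴴ) :
    ∀ (n : ℕ) (j : Λ), (M^[n] ρ) j ≠ 0 → ∀ (k : ℕ), 1 ≤ k →
      ∑ i ∈ Finset.univ.filter
          (fun i : Fin k → Λ => ∀ t : Fin k, (M^[n + t.1 + 1] ρ) (i t) ≠ 0),
        ((M^[n] ρ) j * ((pathOp B (Fin.cons j i))ᴴ * pathOp B (Fin.cons j i))).trace
      = ((M^[n] ρ) j).trace := by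
  intro n j _ k _
  have hρ' (j : Λ) : 0 ≤ ρ j := (hρ j).nonneg
  have hpaths : Finset.univ.filter
      (fun i : Fin k → Λ => ∀ t : Fin k, (M^[n + t.1 + 1] ρ) (i t) ≠ 0) =
      Fintype.piFinset fun t : Fin k => blockSupport (M^[n + t + 1] ρ) := by
    ext i
    simp only [blockSupport, Finset.mem_filter, Finset.mem_univ, true_and, Fintype.mem_piFinset]
  rw [hpaths]
  exact sum_piFinset_blockSupport_trace_mul_pathOp B hB (fun m => M^[m] ρ)
    (OQRW.conj_iterate_le_iterate_succ B M hM hρ') k n j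
    (OQRW.iterate_nonneg B M hM hρ' n j) le_rfl

/-- Paper's Lemma 4.3(iii), at each finite depth `k`: restricting the path sum to the
supports of the evolved states does not change the total trace,
`Σ_{i_1 ∈ Λ(ρ^{(n+1)})} ⋯ Σ_{i_k ∈ Λ(ρ^{(n+k)})} Tr(ρ^{(n)}_j (B_π)ᴴ B_π) = Tr(ρ^{(n)}_j)`. -/
theorem lemma4_3_iii {Λ : Type*} [Fintype Λ] {d : ℕ} (hd : 1 ≤ d)
    (B : Λ → Λ → Matrix (Fin d) (Fin d) ℂ)
    (hB : ∀ j : Λ, ∑ i : Λ, (B i j)ᴴ * B i j = 1)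
    (ρ : Λ → Matrix (Fin d) (Fin d) ℂ)
    (hρ : ∀ j, (ρ j).PosSemidef)
    (htr : ∑ j, (ρ j).trace = 1)
    (M : (Λ → Matrix (Fin d) (Fin d) ℂ) → Λ → Matrix (Fin d) (Fin d) ℂ)
    (hM : ∀ σ i, M σ i = ∑ j : Λ, B i j * σ j * (B i j)ᴴ) :
    ∀ (n : ℕ) (j : Λ), (M^[n] ρ) j ≠ 0 → ∀ (k : ℕ), 1 ≤ k →
      ∑ i ∈ Finset.univ.filter
          (fun i : Fin k → Λ => ∀ t : Fin k, (M^[n + t.1 + 1] ρ) (i t) ≠ 0),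
        ((M^[n] ρ) j * ((pathOp B (Fin.cons j i))ᴴ * pathOp B (Fin.cons j i))).trace
      = ((M^[n] ρ) j).trace :=
  lemma4_3_iii_general B hB ρ hρ M hM
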